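/- Let V be a finite-dimensional real inner product space, W a finite-dimensional real vector space, and c : V → End(W) a linear map satisfying the Clifford relation c(v) ∘ c(v) = -‖v‖² · id_W for all v ∈ V. Let X : ℝ → V be differentiable at t ∈ ℝ, write A(s) = c(X(s)), let A'(t) denote the derivative of A at t, and let g(s) = ‖X(s)‖². Then tr(A(t) ∘ A'(t) ∘ A(t) ∘ A'(t)) = ( (1/2) (g'(t))² - ‖X(t)‖² ‖X'(t)‖² ) · tr(id_W), where tr denotes the trace of endomorphisms of W. (This is item (4) of Lemma 3.7 of the paper: tr[c(X) ∂_{x_j}[c(X)] c(X) ∂_{x_j}[c(X)]] = ((1/2)|X|⁸ (∂_{x_j}(|X|⁻²))² - |X|² |∇_{e_j}X|²) tr[id], stated along one coordinate direction.) -/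

import Mathlib

/-!
Write `x = X t`, `y = X'(t)`, `a = c x` and `b = c y`; by linearity of `c`, `A'(t) = b`.
Polarizing the Clifford relation gives `ab + ba = -2⟪x, y⟫`, so
`abab = a(ba)b = -2⟪x, y⟫ ab - a²b² = -2⟪x, y⟫ ab - ‖x‖²‖y‖²`,
while `tr(ab) = tr(ba)` forces `tr(ab) = -⟪x, y⟫ tr(id)`.
Together with `g'(t) = 2⟪x, y⟫` this is the claim.
-/

open ContinuousLinearMap

theorem clifford_mul_add_mul_swap {V A : Type*} [NormedAddCommGroup V] [InnerProductSpace ℝ V]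
    [Ring A] [Algebra ℝ A] (c : V →ₗ[ℝ] A) (hc : ∀ v, c v * c v = (-‖v‖ ^ 2) • 1) (x y : V) :
    c x * c y + c y * c x = (-(2 * inner ℝ x y)) • 1 := by
  have h := hc (x + y)
  rw [map_add, add_mul, mul_add, mul_add, hc x, hc y, norm_add_sq_real] at h
  linear_combination (norm := module) h

theorem mul_mul_self_eq_of_mul_add_mul_swap {R A : Type*} [CommRing R] [Ring A] [Algebra R A]
    {a b : A} {α β γ : R} (ha : a * a = α • 1) (hb : b * b = β • 1)
    (hab : a * b + b * a = γ • 1) :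
    a * b * (a * b) = γ • (a * b) - (α * β) • 1 := by
  have hba : b * a = γ • 1 - a * b := eq_sub_of_add_eq' hab
  calc a * b * (a * b) = a * (b * a) * b := by simp only [mul_assoc]
    _ = γ • (a * b) - (a * a) * (b * b) := by
      rw [hba, mul_sub, sub_mul, mul_smul_comm, smul_mul_assoc, mul_one]
      simp only [mul_assoc]
    _ = γ • (a * b) - (α * β) • 1 := by
      rw [ha, hb, smul_mul_smul_comm, one_mul]

theorem LinearMap.two_mul_trace_mul_of_mul_add_mul_swap {R M : Type*} [CommRing R]
    [AddCommGroup M] [Module R M] {a b : Module.End R M} {γ : R}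
    (hab : a * b + b * a = γ • 1) :
    2 * trace R M (a * b) = γ * trace R M 1 := by
  have h := congrArg (trace R M) hab
  rwa [map_add, trace_mul_comm R b a, map_smul, smul_eq_mul, ← two_mul] at h

theorem LinearMap.two_mul_trace_mul_mul_self_of_mul_add_mul_swap {R M : Type*} [CommRing R]
    [AddCommGroup M] [Module R M] {a b : Module.End R M} {α β γ : R}
    (ha : a * a = α • 1) (hb : b * b = β • 1) (hab : a * b + b * a = γ • 1) :
    2 * trace R M (a * b * (a * b)) = (γ ^ 2 - 2 * (α * β)) * trace R M 1 := by
  rw [mul_mul_self_eq_of_mul_add_mul_swap ha hb hab, map_sub, map_smul, map_smul, smul_eq_mul,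
    smul_eq_mul, mul_sub, mul_left_comm, two_mul_trace_mul_of_mul_add_mul_swap hab]
  ring

/-- Lemma 3.7(4): if `c : V → End(W)` is linear with `c(v)² = -‖v‖² id`, `X : ℝ → V`
is differentiable at `t`, `A(s) = c(X(s))` and `g(s) = ‖X(s)‖²`, then
`tr(A(t) ∘ A'(t) ∘ A(t) ∘ A'(t)) = ((1/2) g'(t)² - ‖X(t)‖² ‖X'(t)‖²) · tr(id_W)`. -/
theorem trace_clifford_derivClifford_clifford_derivClifford
    {V W : Type*} [NormedAddCommGroup V] [InnerProductSpace ℝ V]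
    [FiniteDimensional ℝ V]
    [NormedAddCommGroup W] [NormedSpace ℝ W] [FiniteDimensional ℝ W]
    (c : V →ₗ[ℝ] (W →L[ℝ] W))
    (hc : ∀ v : V, (c v).comp (c v) = -‖v‖ ^ 2 • ContinuousLinearMap.id ℝ W)
    (X : ℝ → V) (t : ℝ) (hX : DifferentiableAt ℝ X t)
    (A : ℝ → (W →L[ℝ] W)) (hA : A = fun s => c (X s))
    (g : ℝ → ℝ) (hg : g = fun s => ‖X s‖ ^ 2) :
    LinearMap.trace ℝ W
        (((A t).comp ((deriv A t).comp ((A t).comp (deriv A t)))).toLinearMap)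
      = ((1 / 2) * (deriv g t) ^ 2 - ‖X t‖ ^ 2 * ‖deriv X t‖ ^ 2) *
        LinearMap.trace ℝ W (LinearMap.id : W →ₗ[ℝ] W) := by
  have hA' : deriv A t = c (deriv X t) := by
    subst hA
    exact (LinearMap.toContinuousLinearMap c).hasFDerivAt.comp_hasDerivAt t hX.hasDerivAt |>.deriv
  have hg' : deriv g t = 2 * inner ℝ (X t) (deriv X t) := by
    subst hg
    exact hX.hasDerivAt.norm_sq.deriv
  let c' : V →ₗ[ℝ] Module.End ℝ W := (coeLM ℝ).comp c
  have hc' : ∀ v, c' v * c' v = (-‖v‖ ^ 2) • 1 := fun v => congrArg toLinearMap (hc v)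
  have key := LinearMap.two_mul_trace_mul_mul_self_of_mul_add_mul_swap (hc' (X t))
    (hc' (deriv X t)) (clifford_mul_add_mul_swap c' hc' (X t) (deriv X t))
  have hLHS : ((A t).comp ((deriv A t).comp ((A t).comp (deriv A t)))).toLinearMap
      = c' (X t) * c' (deriv X t) * (c' (X t) * c' (deriv X t)) := by
    rw [hA', hA, mul_assoc]
    rfl
  rw [hLHS, hg', ← Module.End.one_eq_id]
  linear_combination (1 / 2 : ℝ) * key
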